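/- Let n ≥ 2 and let D ⊆ ℝⁿ be a Lebesgue measurable set satisfying lim_{ρ→∞} |D ∩ B_ρ| / |B_ρ| = 0. Then lim_{ρ→∞} ∫_{ℝⁿ} χ_D(ρx) / (1 + |x|^{n+1}) dx = 0. -/

import Mathlib

open MeasureTheory Filter Metric Set Asymptotics

noncomputable section

/-- The Laplacian of a function `f : ℝⁿ → ℝ`, as the sum of its second partial
derivatives (computed via iterated Fréchet derivatives in the coordinate directions). -/
def lap {n : ℕ} (f : EuclideanSpace ℝ (Fin n) → ℝ) (x : EuclideanSpace ℝ (Fin n)) : ℝ :=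
  ∑ i : Fin n,
    fderiv ℝ (fun y => fderiv ℝ f y (EuclideanSpace.single i 1)) x (EuclideanSpace.single i 1)

/-- `h` is harmonic on the set `Ω`: it is `C²` on `Ω` and its Laplacian vanishes there. -/
def HarmonicOnSet {n : ℕ} (h : EuclideanSpace ℝ (Fin n) → ℝ)
    (Ω : Set (EuclideanSpace ℝ (Fin n))) : Prop :=
  ContDiffOn ℝ 2 h Ω ∧ ∀ x ∈ Ω, lap h x = 0

/-- `Ω ⊆ ℝⁿ` is a null quadrature domain: it is open and `∫_Ω h = 0` for every `h`
harmonic on `Ω` and Lebesgue integrable over `Ω`. -/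
def IsNullQuadratureDomain {n : ℕ} (Ω : Set (EuclideanSpace ℝ (Fin n))) : Prop :=
  IsOpen Ω ∧ ∀ h : EuclideanSpace ℝ (Fin n) → ℝ,
    HarmonicOnSet h Ω → IntegrableOn h Ω volume → ∫ x in Ω, h x = 0

/-- `Δ u = -χ_Ω` in the sense of distributions on `ℝⁿ`:
`∫ u Δφ = -∫_Ω φ` for every smooth compactly supported test function `φ`. -/
def LapEqNegChi {n : ℕ} (u : EuclideanSpace ℝ (Fin n) → ℝ)
    (Ω : Set (EuclideanSpace ℝ (Fin n))) : Prop :=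
  ∀ φ : EuclideanSpace ℝ (Fin n) → ℝ, ContDiff ℝ (⊤ : ℕ∞) φ → HasCompactSupport φ →
    ∫ x, u x * lap φ x = - ∫ x in Ω, φ x

/-- `u` is a Schwarz potential of the open set `Ω`:
`u` is continuous, `Δu = -χ_Ω` distributionally, and `u = 0` on `ℝⁿ ∖ Ω`. -/
def IsSchwarzPotential {n : ℕ} (u : EuclideanSpace ℝ (Fin n) → ℝ)
    (Ω : Set (EuclideanSpace ℝ (Fin n))) : Prop :=
  Continuous u ∧ LapEqNegChi u Ω ∧ ∀ x ∈ Ωᶜ, u x = 0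

/-- `u(x) = O(|x|² log |x|)` as `|x| → ∞`. -/
def GrowthSqLog {n : ℕ} (u : EuclideanSpace ℝ (Fin n) → ℝ) : Prop :=
  u =O[Bornology.cobounded (EuclideanSpace ℝ (Fin n))] fun x => ‖x‖ ^ 2 * Real.log ‖x‖

/-- The surface area `ω_n` of the unit sphere in `ℝⁿ`, expressed as `n` times the
volume of the unit ball. -/
def sphereArea (n : ℕ) : ℝ :=
  n * (volume (ball (0 : EuclideanSpace ℝ (Fin n)) 1)).toReal

/-- The Newtonian kernel `J` on `ℝⁿ`. -/
def newtonKernel {n : ℕ} (x : EuclideanSpace ℝ (Fin n)) : ℝ :=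
  if n = 2 then -(1 / (2 * Real.pi)) * Real.log ‖x‖
  else 1 / (((n : ℝ) - 2) * sphereArea n * ‖x‖ ^ (n - 2))

/-- The modified kernel `J₂(x,y) = J(x-y) - χ_{|y|>1}(y) Σ_{|α| ≤ 2} ((-x)^α/α!) ∂^α J(y)`;
the multi-index sum is written equivalently as `Σ_{k ≤ 2} (1/k!) D^k J(y)[-x,…,-x]`. -/
def J2 {n : ℕ} (x y : EuclideanSpace ℝ (Fin n)) : ℝ :=
  newtonKernel (x - y) -
    if 1 < ‖y‖ then
      ∑ k ∈ Finset.range 3,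
        ((k.factorial : ℝ))⁻¹ * iteratedFDeriv ℝ k newtonKernel y (fun _ => -x)
    else 0

/-- The generalized Newtonian potential `V₂(σ)(x) = ∫ J₂(x,y) σ(y) dy`. -/
def V2 {n : ℕ} (σ : EuclideanSpace ℝ (Fin n) → ℝ) (x : EuclideanSpace ℝ (Fin n)) : ℝ :=
  ∫ y, J2 x y * σ y

open Topology

lemma weight_integrable (n : ℕ) :
    Integrable (fun x : EuclideanSpace ℝ (Fin n) => (1 + ‖x‖ ^ (n + 1))⁻¹) := by
  have h1 : Integrable (fun x : EuclideanSpace ℝ (Fin n) => (1 + ‖x‖) ^ (-((n : ℝ) + 1)))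
      volume := by
    apply integrable_one_add_norm
    rw [finrank_euclideanSpace_fin]
    linarith
  have h2 := h1.const_mul ((2 : ℝ) ^ n)
  apply h2.mono'
  · apply Measurable.aestronglyMeasurable
    have hc : Continuous fun x : EuclideanSpace ℝ (Fin n) => (1 + ‖x‖ ^ (n + 1))⁻¹ := by
      apply Continuous.inv₀ (by continuity)
      intro x; positivity
    exact hc.measurable
  · filter_upwards with x
    have hx : (0 : ℝ) ≤ ‖x‖ := norm_nonneg x
    have key : (1 + ‖x‖) ^ (n + 1) ≤ 2 ^ n * (1 + ‖x‖ ^ (n + 1)) := by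
      have := add_pow_le (zero_le_one (α := ℝ)) hx (n + 1)
      simpa using this
    have hb : (0 : ℝ) < (1 + ‖x‖) ^ (n + 1) := by positivity
    have ha : (0 : ℝ) < 1 + ‖x‖ ^ (n + 1) := by positivity
    have hrpow : (1 + ‖x‖) ^ (-((n : ℝ) + 1)) = ((1 + ‖x‖) ^ (n + 1))⁻¹ := by
      rw [← Real.rpow_natCast (1 + ‖x‖) (n + 1), ← Real.rpow_neg (by positivity)]
      push_cast; ring_nf
    rw [Real.norm_eq_abs, abs_of_nonneg (by positivity), hrpow]
    rw [inv_le_iff_one_le_mul₀ ha, ← div_le_iff₀' (by positivity : (0:ℝ) < 2 ^ n * ((1 + ‖x‖) ^ (n + 1))⁻¹)]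
    rw [div_le_iff₀ (by positivity : (0:ℝ) < 2 ^ n * ((1 + ‖x‖) ^ (n + 1))⁻¹)]
    calc (1:ℝ) = ((1 + ‖x‖) ^ (n + 1)) * ((1 + ‖x‖) ^ (n + 1))⁻¹ := by field_simp
    _ ≤ (2 ^ n * (1 + ‖x‖ ^ (n + 1))) * ((1 + ‖x‖) ^ (n + 1))⁻¹ := by
        apply mul_le_mul_of_nonneg_right key (by positivity)
    _ = (1 + ‖x‖ ^ (n + 1)) * (2 ^ n * ((1 + ‖x‖) ^ (n + 1))⁻¹) := by ring

/-- if `D` has zero Lebesgue density at infinity then the `𝓛`-norm of the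
rescaled characteristic functions `χ_D(ρ ·)` tends to zero. -/
theorem density_zero_implies_L_norm_zero {n : ℕ} (hn : 2 ≤ n)
    (D : Set (EuclideanSpace ℝ (Fin n))) (hD : MeasurableSet D)
    (hdens : Tendsto (fun ρ : ℝ =>
        (volume (D ∩ ball (0 : EuclideanSpace ℝ (Fin n)) ρ)).toReal /
          (volume (ball (0 : EuclideanSpace ℝ (Fin n)) ρ)).toReal)
      atTop (nhds 0)) :
    Tendsto (fun ρ : ℝ =>
        ∫ x : EuclideanSpace ℝ (Fin n),
          D.indicator (fun _ => (1 : ℝ)) (ρ • x) / (1 + ‖x‖ ^ (n + 1)))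
      atTop (nhds 0) := by
  haveI : Nonempty (Fin n) := ⟨⟨0, by omega⟩⟩
  set w : EuclideanSpace ℝ (Fin n) → ℝ := fun x => (1 + ‖x‖ ^ (n + 1))⁻¹ with hw
  have hwpos : ∀ x, 0 < w x := fun x => by simp only [hw]; positivity
  have hwle1 : ∀ x, w x ≤ 1 := fun x => by
    simp only [hw]
    exact inv_le_one_of_one_le₀ (le_add_of_nonneg_right (by positivity))
  have hwint : Integrable w := weight_integrable n
  have hwcont : Continuous w := Continuous.inv₀ (by continuity) (fun x => by positivity)
  rw [NormedAddCommGroup.tendsto_nhds_zero]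
  intro ε hε
  have hball : Tendsto (fun k : ℕ => ∫ x in ball (0 : EuclideanSpace ℝ (Fin n)) (k : ℝ), w x)
      atTop (𝓝 (∫ x, w x)) := by
    have h := tendsto_setIntegral_of_monotone (μ := volume) (f := w)
      (s := fun k : ℕ => ball (0 : EuclideanSpace ℝ (Fin n)) (k : ℝ))
      (fun k => measurableSet_ball)
      (fun a b hab => ball_subset_ball (by exact_mod_cast hab))
      (by rw [iUnion_ball_nat]; exact hwint.integrableOn)
    rwa [iUnion_ball_nat, Measure.restrict_univ] at h
  have hcompl : Tendsto (fun k : ℕ => ∫ x in (ball (0 : EuclideanSpace ℝ (Fin n)) (k : ℝ))ᶜ, w x)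
      atTop (𝓝 0) := by
    have heq : ∀ k : ℕ, ∫ x in (ball (0 : EuclideanSpace ℝ (Fin n)) (k : ℝ))ᶜ, w x
        = (∫ x, w x) - ∫ x in ball (0 : EuclideanSpace ℝ (Fin n)) (k : ℝ), w x := by
      intro k
      rw [← integral_add_compl measurableSet_ball hwint]
      ring
    simp only [heq]
    simpa using (tendsto_const_nhds (x := ∫ x, w x) (f := atTop (α := ℕ))).sub hball
  obtain ⟨M₀, hM₀⟩ := ((hcompl.eventually_lt_const (show (0:ℝ) < ε/2 by positivity)).and
    (eventually_ge_atTop 1)).exists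
  set M : ℝ := (M₀ : ℝ) with hMdef
  have hM1 : 1 ≤ M := by rw [hMdef]; exact_mod_cast hM₀.2
  have hM0 : 0 < M := lt_of_lt_of_le one_pos hM1
  have htail : ∫ x in (ball (0 : EuclideanSpace ℝ (Fin n)) M)ᶜ, w x < ε / 2 := hM₀.1
  have hb1 : (0:ℝ) < (volume (ball (0 : EuclideanSpace ℝ (Fin n)) 1)).toReal :=
    ENNReal.toReal_pos (measure_ball_pos volume 0 one_pos).ne' measure_ball_lt_top.ne
  set C : ℝ := M ^ n * (volume (ball (0 : EuclideanSpace ℝ (Fin n)) 1)).toReal with hCdef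
  have hC : 0 < C := by positivity
  have hq : Tendsto (fun ρ : ℝ =>
      (volume (D ∩ ball (0 : EuclideanSpace ℝ (Fin n)) (ρ * M))).toReal /
        (volume (ball (0 : EuclideanSpace ℝ (Fin n)) (ρ * M))).toReal) atTop (𝓝 0) :=
    hdens.comp (tendsto_id.atTop_mul_const hM0)
  have hqe := hq.eventually_lt_const (show (0:ℝ) < ε / (2 * C) by positivity)
  filter_upwards [hqe, eventually_ge_atTop (1:ℝ)] with ρ hρq hρ1
  have hρ0 : (0:ℝ) < ρ := lt_of_lt_of_le one_pos hρ1
  set T : Set (EuclideanSpace ℝ (Fin n)) := (fun x => ρ • x) ⁻¹' D with hTdef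
  have hT : MeasurableSet T := (measurable_const_smul ρ) hD
  have hind : ∀ x : EuclideanSpace ℝ (Fin n),
      D.indicator (fun _ => (1:ℝ)) (ρ • x) / (1 + ‖x‖ ^ (n + 1))
        = T.indicator (fun _ => (1:ℝ)) x * w x := by
    intro x
    rw [div_eq_mul_inv]
    by_cases hx : ρ • x ∈ D
    · simp [Set.indicator_of_mem, hx, hTdef, Set.mem_preimage, hw]
    · simp [Set.indicator_of_notMem, hx, hTdef, Set.mem_preimage, hw]
  simp only [hind]
  have hge0 : ∀ x, 0 ≤ T.indicator (fun _ => (1:ℝ)) x :=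
    fun x => Set.indicator_nonneg (fun _ _ => zero_le_one) x
  have hle1 : ∀ x, T.indicator (fun _ => (1:ℝ)) x ≤ 1 := by
    intro x; by_cases hx : x ∈ T <;> simp [hx]
  have hmeas : Measurable fun x => T.indicator (fun _ => (1:ℝ)) x :=
    measurable_const.indicator hT
  have hint : Integrable (fun x => T.indicator (fun _ => (1:ℝ)) x * w x) := by
    apply hwint.mono' ((hmeas.mul hwcont.measurable).aestronglyMeasurable)
    filter_upwards with x
    simp only [Pi.mul_apply]
    rw [Real.norm_eq_abs, abs_mul, abs_of_nonneg (hge0 x), abs_of_nonneg (hwpos x).le]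
    exact mul_le_of_le_one_left (hwpos x).le (hle1 x)
  have hnonneg : 0 ≤ ∫ x, T.indicator (fun _ => (1:ℝ)) x * w x :=
    integral_nonneg (fun x => mul_nonneg (hge0 x) (hwpos x).le)
  rw [Real.norm_eq_abs, abs_of_nonneg hnonneg]
  have hsplit : ∫ x, T.indicator (fun _ => (1:ℝ)) x * w x
      = (∫ x in ball (0 : EuclideanSpace ℝ (Fin n)) M, T.indicator (fun _ => (1:ℝ)) x * w x)
        + ∫ x in (ball (0 : EuclideanSpace ℝ (Fin n)) M)ᶜ, T.indicator (fun _ => (1:ℝ)) x * w x :=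
    (integral_add_compl measurableSet_ball hint).symm
  rw [hsplit]
  have hindint : IntegrableOn (fun x => T.indicator (fun _ => (1:ℝ)) x)
      (ball (0 : EuclideanSpace ℝ (Fin n)) M) := by
    apply Integrable.mono' (integrableOn_const (C := (1:ℝ)) measure_ball_lt_top.ne)
      hmeas.aestronglyMeasurable
    filter_upwards with x
    rw [Real.norm_eq_abs, abs_of_nonneg (hge0 x)]
    exact hle1 x
  have hbd1 : ∫ x in ball (0 : EuclideanSpace ℝ (Fin n)) M, T.indicator (fun _ => (1:ℝ)) x * w x
      ≤ (volume (T ∩ ball (0 : EuclideanSpace ℝ (Fin n)) M)).toReal := by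
    have heq : ∫ x in ball (0 : EuclideanSpace ℝ (Fin n)) M, T.indicator (fun _ => (1:ℝ)) x
        = (volume (T ∩ ball (0 : EuclideanSpace ℝ (Fin n)) M)).toReal := by
      rw [setIntegral_indicator hT, setIntegral_const, smul_eq_mul, mul_one, inter_comm, Measure.real]
    rw [← heq]
    apply setIntegral_mono_on hint.integrableOn hindint measurableSet_ball
    intro x _
    exact mul_le_of_le_one_right (hge0 x) (hwle1 x)
  have hbd2 : ∫ x in (ball (0 : EuclideanSpace ℝ (Fin n)) M)ᶜ, T.indicator (fun _ => (1:ℝ)) x * w x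
      ≤ ∫ x in (ball (0 : EuclideanSpace ℝ (Fin n)) M)ᶜ, w x := by
    apply setIntegral_mono_on hint.integrableOn hwint.integrableOn measurableSet_ball.compl
    intro x _
    exact mul_le_of_le_one_left (hwpos x).le (hle1 x)
  have hsetEq : T ∩ ball (0 : EuclideanSpace ℝ (Fin n)) M
      = (fun x : EuclideanSpace ℝ (Fin n) => ρ • x) ⁻¹' (D ∩ ball 0 (ρ * M)) := by
    ext x
    simp only [hTdef, Set.mem_inter_iff, Set.mem_preimage, mem_ball_zero_iff, norm_smul,
      Real.norm_eq_abs, abs_of_pos hρ0]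
    exact and_congr_right fun _ => (mul_lt_mul_iff_right₀ hρ0).symm
  have e1 : (volume (T ∩ ball (0 : EuclideanSpace ℝ (Fin n)) M)).toReal
      = (ρ ^ n)⁻¹ * (volume (D ∩ ball (0 : EuclideanSpace ℝ (Fin n)) (ρ * M))).toReal := by
    rw [hsetEq, Measure.addHaar_preimage_smul volume hρ0.ne', finrank_euclideanSpace_fin,
      abs_of_pos (by positivity), ENNReal.toReal_mul, ENNReal.toReal_ofReal (by positivity)]
  have e2 : (volume (ball (0 : EuclideanSpace ℝ (Fin n)) (ρ * M))).toReal
      = (ρ * M) ^ n * (volume (ball (0 : EuclideanSpace ℝ (Fin n)) 1)).toReal := by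
    rw [Measure.addHaar_ball volume 0 (by positivity : (0:ℝ) ≤ ρ * M), finrank_euclideanSpace_fin,
      ENNReal.toReal_mul, ENNReal.toReal_ofReal (by positivity)]
  have e3 : (volume (T ∩ ball (0 : EuclideanSpace ℝ (Fin n)) M)).toReal
      = C * ((volume (D ∩ ball (0 : EuclideanSpace ℝ (Fin n)) (ρ * M))).toReal /
          (volume (ball (0 : EuclideanSpace ℝ (Fin n)) (ρ * M))).toReal) := by
    rw [e1, e2, hCdef]
    rw [mul_pow]
    field_simp
  have hterm1 : (volume (T ∩ ball (0 : EuclideanSpace ℝ (Fin n)) M)).toReal < ε / 2 := by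
    rw [e3]
    calc C * ((volume (D ∩ ball (0 : EuclideanSpace ℝ (Fin n)) (ρ * M))).toReal /
          (volume (ball (0 : EuclideanSpace ℝ (Fin n)) (ρ * M))).toReal)
        < C * (ε / (2 * C)) := by
          apply mul_lt_mul_of_pos_left _ hC
          exact hρq
      _ = ε / 2 := by field_simp
  linarith [hbd1, hbd2, htail, hterm1]
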